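/- arXiv:1506.02193 — 4 statements merged into one kernel-verified Lean document; each statement's English description precedes it below -/
import Mathlib

section
/- Fix ε ∈ (0,1) and real numbers 0 ≤ b < b′. Define time-dependent conductances on ℤ by: μ^{(t)}(i,i−1)=1−ε, μ^{(t)}(i,i)=b, μ^{(t)}(i,i+1)=1+ε whenever t+i is even, and μ^{(t)}(i,i−1)=1+ε, μ^{(t)}(i,i)=b′, μ^{(t)}(i,i+1)=1−ε whenever t+i is odd. Set γ = b/(b+2) and γ′ = b′/(b′+2), so 0 ≤ γ < γ′ < 1. Then the discrete-time random walk (X_t) among these conductances started at X_0 = 0 satisfies, almost surely, X_t/t → ε(γ′−γ)/(γ′+γ) > 0. -/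
open MeasureTheory Filter

/-- Total conductance at a vertex: `μ^{(t)}(x) = Σ_y μ^{(t)}(x,y)`. -/
noncomputable def wdeg (μ : ℕ → ℤ → ℤ → ℝ) (t : ℕ) (x : ℤ) : ℝ := ∑' y : ℤ, μ t x y

/-- One-step transition probability `P^{(t)}(x,y) = μ^{(t)}(x,y)/μ^{(t)}(x)`. -/
noncomputable def stepP (μ : ℕ → ℤ → ℤ → ℝ) (t : ℕ) (x y : ℤ) : ℝ :=
  μ t x y / wdeg μ t x

/-- `(X_t)_{t∈ℕ}` under `P` is the discrete-time random walk among the time-dependent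
conductances `μ`, started at `x₀`: its finite-dimensional distributions are the ones
produced by the Ionescu–Tulcea construction. -/
def IsWalkLaw (μ : ℕ → ℤ → ℤ → ℝ) {Ω : Type*} [MeasurableSpace Ω] (P : Measure Ω)
    (X : ℕ → Ω → ℤ) (x₀ : ℤ) : Prop :=
  (∀ t, Measurable (X t)) ∧
  ∀ (n : ℕ) (path : ℕ → ℤ),
    P {ω | ∀ t ≤ n, X t ω = path t} =
      (if path 0 = x₀ then 1 else 0) *
        ENNReal.ofReal (∏ t ∈ Finset.range n, stepP μ t (path t) (path (t + 1)))

/-!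
Put `Y_n = X_n + d · 1{n + X_n even}`. When the walk moves, `n + X_n` keeps its parity; when it
stays put, the parity flips. For `d = ε (b + b' + 4) / (b b' + b + b')` the mean increment of `Y`
is the same number `c = ε (γ' - γ) / (γ' + γ)` in both parity classes, so the one-step
exponential moments of `Y` are `1 + c θ + o(θ)`, uniformly in the state. Hence for every
`κ ≠ c` there is a small `θ` of the sign of `κ - c` for which `exp (θ (Y_n - κ n))` has
geometrically decaying mean. Chebyshev's inequality and Borel–Cantelli then place `X_n` eventually
on the same side of `κ n` as `c n`, almost surely, and letting `κ → c` gives `X_n / n → c`.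
-/

open scoped ENNReal Topology
open Real

def extendPath {n : ℕ} (v : Fin n → ℤ) (x : ℤ) (t : ℕ) : ℤ :=
  if h : t < n then v ⟨t, h⟩ else x

@[simp] lemma extendPath_self {n : ℕ} (v : Fin n → ℤ) (x : ℤ) : extendPath v x n = x := by
  simp [extendPath]

lemma extendPath_snoc {n : ℕ} (v : Fin n → ℤ) (z y : ℤ) {t : ℕ} (ht : t ≤ n) :
    extendPath (Fin.snoc v z : Fin (n + 1) → ℤ) y t = extendPath v z t := by
  rcases ht.lt_or_eq with ht | rfl
  · simp [extendPath, ht, Nat.lt_succ_of_lt ht, Fin.snoc, Fin.castLT]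
  · simp [extendPath, Fin.snoc]

lemma measurableSet_cylinder {Ω : Type*} [MeasurableSpace Ω] {X : ℕ → Ω → ℤ}
    (hX : ∀ t, Measurable (X t)) (n : ℕ) (path : ℕ → ℤ) :
    MeasurableSet {ω | ∀ t ≤ n, X t ω = path t} := by
  simp only [Set.ofPred_forall]
  exact .iInter fun t => .iInter fun _ => hX t (measurableSet_singleton _)

lemma measure_eq_tsum_cylinder {Ω : Type*} [MeasurableSpace Ω] (P : Measure Ω)
    {X : ℕ → Ω → ℤ} (hX : ∀ t, Measurable (X t)) (n : ℕ) (x : ℤ) :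
    P {ω | X n ω = x} = ∑' v : Fin n → ℤ, P {ω | ∀ t ≤ n, X t ω = extendPath v x t} := by
  have hunion : {ω | X n ω = x} = ⋃ v : Fin n → ℤ, {ω | ∀ t ≤ n, X t ω = extendPath v x t} := by
    ext ω
    simp only [Set.mem_ofPred_eq, Set.mem_iUnion]
    refine ⟨fun h => ⟨fun i => X i ω, fun t ht => ?_⟩, fun ⟨v, hv⟩ => by simpa using hv n le_rfl⟩
    rcases ht.lt_or_eq with ht | rfl
    · simp [extendPath, ht]
    · simpa using h
  have hdisj : Pairwise (Function.onFun Disjoint fun v : Fin n → ℤ =>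
      {ω | ∀ t ≤ n, X t ω = extendPath v x t}) := by
    refine fun v w hvw => Set.disjoint_left.2 fun ω hv hw => hvw (funext fun i => ?_)
    have := (hv i i.2.le).symm.trans (hw i i.2.le)
    simpa [extendPath] using this
  rw [hunion, measure_iUnion hdisj fun v => measurableSet_cylinder hX n _]

lemma lintegral_comp_eq_tsum {Ω : Type*} [MeasurableSpace Ω] (P : Measure Ω) {Y : Ω → ℤ}
    (hY : Measurable Y) (f : ℤ → ℝ≥0∞) :
    ∫⁻ ω, f (Y ω) ∂P = ∑' x, P {ω | Y ω = x} * f x := by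
  rw [← lintegral_map (measurable_of_countable f) hY, lintegral_countable']
  exact tsum_congr fun x => by rw [Measure.map_apply hY (measurableSet_singleton x), mul_comm]; rfl

namespace IsWalkLaw

variable {μ : ℕ → ℤ → ℤ → ℝ} {Ω : Type*} [MeasurableSpace Ω] {P : Measure Ω}
  {X : ℕ → Ω → ℤ} {x₀ : ℤ}

lemma measure_initial (hX : IsWalkLaw μ P X x₀) (x : ℤ) :
    P {ω | X 0 ω = x} = if x = x₀ then 1 else 0 := by
  simpa using hX.2 0 fun _ => x

lemma measure_cylinder_succ (hX : IsWalkLaw μ P X x₀) (hp : ∀ t x y, 0 ≤ stepP μ t x y)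
    (n : ℕ) (path : ℕ → ℤ) :
    P {ω | ∀ t ≤ n + 1, X t ω = path t} =
      P {ω | ∀ t ≤ n, X t ω = path t} * ENNReal.ofReal (stepP μ n (path n) (path (n + 1))) := by
  rw [hX.2, hX.2, Finset.prod_range_succ,
    ENNReal.ofReal_mul (Finset.prod_nonneg fun _ _ => hp _ _ _), mul_assoc]

lemma measure_succ_eq_tsum (hX : IsWalkLaw μ P X x₀) (hp : ∀ t x y, 0 ≤ stepP μ t x y)
    (n : ℕ) (y : ℤ) :
    P {ω | X (n + 1) ω = y} = ∑' x, P {ω | X n ω = x} * ENNReal.ofReal (stepP μ n x y) := by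
  have hsnoc (z : ℤ) (v : Fin n → ℤ) :
      P {ω | ∀ t ≤ n + 1, X t ω = extendPath (Fin.snoc v z : Fin (n + 1) → ℤ) y t} =
        P {ω | ∀ t ≤ n, X t ω = extendPath v z t} * ENNReal.ofReal (stepP μ n z y) := by
    rw [hX.measure_cylinder_succ hp, extendPath_snoc v z y le_rfl, extendPath_self,
      extendPath_self]
    congr 3
    ext ω
    exact forall₂_congr fun t ht => by rw [extendPath_snoc v z y ht]
  rw [measure_eq_tsum_cylinder P hX.1, ← (Fin.snocEquiv fun _ => ℤ).tsum_eq, ENNReal.tsum_prod']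
  refine tsum_congr fun z => ?_
  rw [measure_eq_tsum_cylinder P hX.1, ← ENNReal.tsum_mul_right]
  exact tsum_congr fun v => hsnoc z v

lemma lintegral_le_of_drift (hX : IsWalkLaw μ P X x₀) (hp : ∀ t x y, 0 ≤ stepP μ t x y)
    (w : ℕ → ℤ → ℝ≥0∞) (ρ : ℝ≥0∞)
    (hw : ∀ n x, ∑' y, ENNReal.ofReal (stepP μ n x y) * w (n + 1) y ≤ ρ * w n x) (n : ℕ) :
    ∫⁻ ω, w n (X n ω) ∂P ≤ ρ ^ n * w 0 x₀ := by
  rw [lintegral_comp_eq_tsum P (hX.1 n)]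
  induction n with
  | zero => simp [hX.measure_initial]
  | succ n ih =>
    calc ∑' y, P {ω | X (n + 1) ω = y} * w (n + 1) y
        = ∑' x, P {ω | X n ω = x} * ∑' y, ENNReal.ofReal (stepP μ n x y) * w (n + 1) y := by
          simp_rw [hX.measure_succ_eq_tsum hp, ← ENNReal.tsum_mul_right, mul_assoc]
          rw [ENNReal.tsum_comm]
          simp_rw [ENNReal.tsum_mul_left]
      _ ≤ ∑' x, P {ω | X n ω = x} * (ρ * w n x) :=
          ENNReal.tsum_le_tsum fun x => mul_le_mul_right (hw n x) _
      _ = ρ * ∑' x, P {ω | X n ω = x} * w n x := by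
          simp_rw [mul_left_comm _ ρ, ENNReal.tsum_mul_left]
      _ ≤ ρ * (ρ ^ n * w 0 x₀) := mul_le_mul_right ih ρ
      _ = ρ ^ (n + 1) * w 0 x₀ := by ring

/-- Chebyshev's inequality for `exp (θ (Y_n - κ n) + |θ| D)`, which is `≥ 1` on the event and
whose mean grows by at most the factor `exp (θ (ℓ - κ))` per step. -/
lemma measure_tilted_tail_le (hX : IsWalkLaw μ P X x₀) (hp : ∀ t x y, 0 ≤ stepP μ t x y)
    {Y : ℕ → ℤ → ℝ} {D θ ℓ : ℝ} (hY : ∀ n x, |Y n x - x| ≤ D)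
    (hdrift : ∀ n x, ∑' y, ENNReal.ofReal (stepP μ n x y) * ENNReal.ofReal (exp (θ * Y (n + 1) y))
      ≤ ENNReal.ofReal (exp (θ * (Y n x + ℓ))))
    (κ : ℝ) (n : ℕ) :
    P {ω | θ * (κ * n) ≤ θ * X n ω} ≤
      ENNReal.ofReal (exp (θ * Y 0 x₀ + |θ| * D)) * ENNReal.ofReal (exp (θ * (ℓ - κ))) ^ n := by
  set w : ℕ → ℤ → ℝ≥0∞ := fun n x => ENNReal.ofReal (exp (θ * (Y n x - κ * n) + |θ| * D))
  have hw (n : ℕ) (x : ℤ) : ∑' y, ENNReal.ofReal (stepP μ n x y) * w (n + 1) y ≤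
      ENNReal.ofReal (exp (θ * (ℓ - κ))) * w n x := by
    have hsplit (y : ℤ) : w (n + 1) y = ENNReal.ofReal (exp (θ * Y (n + 1) y)) *
        ENNReal.ofReal (exp (-(θ * κ * (n + 1)) + |θ| * D)) := by
      rw [← ENNReal.ofReal_mul (exp_pos _).le, ← exp_add]
      simp only [w]
      push_cast
      ring_nf
    simp_rw [hsplit, ← mul_assoc, ENNReal.tsum_mul_right]
    calc _ ≤ ENNReal.ofReal (exp (θ * (Y n x + ℓ))) *
          ENNReal.ofReal (exp (-(θ * κ * (n + 1)) + |θ| * D)) := mul_le_mul_left (hdrift n x) _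
      _ = _ := by
          rw [← ENNReal.ofReal_mul (exp_pos _).le, ← ENNReal.ofReal_mul (exp_pos _).le,
            ← exp_add, ← exp_add]
          ring_nf
  have hevent : {ω | θ * (κ * n) ≤ θ * X n ω} ⊆ {ω | 1 ≤ w n (X n ω)} := by
    intro ω hω
    simp only [Set.mem_ofPred_eq] at hω ⊢
    rw [← ENNReal.ofReal_one, ← exp_zero]
    refine ENNReal.ofReal_le_ofReal (exp_le_exp.2 ?_)
    have h₁ := neg_abs_le (θ * (Y n (X n ω) - X n ω))
    rw [abs_mul] at h₁
    nlinarith [mul_le_mul_of_nonneg_left (hY n (X n ω)) (abs_nonneg θ)]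
  calc _ ≤ P {ω | 1 ≤ w n (X n ω)} := measure_mono hevent
    _ ≤ ∫⁻ ω, w n (X n ω) ∂P := by
        simpa using mul_meas_ge_le_lintegral₀
          ((measurable_of_countable (w n)).comp (hX.1 n)).aemeasurable 1
    _ ≤ _ := (hX.lintegral_le_of_drift hp w _ hw n).trans_eq (by simp [w, mul_comm])

lemma ae_eventually_mul_lt (hX : IsWalkLaw μ P X x₀) (hp : ∀ t x y, 0 ≤ stepP μ t x y)
    {Y : ℕ → ℤ → ℝ} {D θ ℓ κ : ℝ} (hY : ∀ n x, |Y n x - x| ≤ D)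
    (hdrift : ∀ n x, ∑' y, ENNReal.ofReal (stepP μ n x y) * ENNReal.ofReal (exp (θ * Y (n + 1) y))
      ≤ ENNReal.ofReal (exp (θ * (Y n x + ℓ))))
    (hℓκ : θ * ℓ < θ * κ) :
    ∀ᵐ ω ∂P, ∀ᶠ n : ℕ in atTop, θ * X n ω < θ * (κ * n) := by
  have hr : ENNReal.ofReal (exp (θ * (ℓ - κ))) < 1 :=
    ENNReal.ofReal_lt_one.2 (exp_lt_one_iff.2 (by linarith))
  have hsum : ∑' n : ℕ, P {ω | θ * (κ * n) ≤ θ * X n ω} ≠ ∞ := by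
    refine ne_top_of_le_ne_top ?_
      (ENNReal.tsum_le_tsum (hX.measure_tilted_tail_le hp hY hdrift κ))
    rw [ENNReal.tsum_mul_left, ENNReal.tsum_geometric]
    exact ENNReal.mul_ne_top ENNReal.ofReal_ne_top (ENNReal.inv_ne_top.2 (tsub_pos_of_lt hr).ne')
  filter_upwards [ae_eventually_notMem hsum] with ω hω
  exact hω.mono fun n hn => not_le.1 hn

end IsWalkLaw

lemma ae_tendsto_div_of_eventually {Ω : Type*} [MeasurableSpace Ω] {P : Measure Ω}
    {Z : ℕ → Ω → ℝ} {c : ℝ}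
    (h : ∀ κ ≠ c, ∀ᵐ ω ∂P, ∀ᶠ n : ℕ in atTop, (κ - c) * (Z n ω - κ * n) < 0) :
    ∀ᵐ ω ∂P, Tendsto (fun n : ℕ => Z n ω / n) atTop (𝓝 c) := by
  have hδ (m : ℕ) : (0 : ℝ) < 1 / (m + 1) := by positivity
  have hup := ae_all_iff.2 fun m : ℕ => h (c + 1 / (m + 1)) (by linarith [hδ m])
  have hlow := ae_all_iff.2 fun m : ℕ => h (c - 1 / (m + 1)) (by linarith [hδ m])
  filter_upwards [hup, hlow] with ω hu hl
  refine tendsto_order.2 ⟨fun a ha => ?_, fun a ha => ?_⟩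
  · obtain ⟨m, hm⟩ := exists_nat_one_div_lt (sub_pos.2 ha)
    filter_upwards [hl m, eventually_gt_atTop 0] with n hn hn0
    rw [sub_sub_cancel_left, neg_mul, neg_lt_zero] at hn
    have hn0 : (0 : ℝ) < n := Nat.cast_pos.2 hn0
    rw [lt_div_iff₀ hn0]
    calc a * n < (c - 1 / (m + 1)) * n := by gcongr; linarith
      _ < Z n ω := sub_pos.1 (pos_of_mul_pos_right hn (hδ m).le)
  · obtain ⟨m, hm⟩ := exists_nat_one_div_lt (sub_pos.2 ha)
    filter_upwards [hu m, eventually_gt_atTop 0] with n hn hn0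
    rw [add_sub_cancel_left] at hn
    have hn0 : (0 : ℝ) < n := Nat.cast_pos.2 hn0
    rw [div_lt_iff₀ hn0]
    calc Z n ω < (c + 1 / (m + 1)) * n := sub_neg.1 (neg_of_mul_neg_right hn (hδ m).le)
      _ < a * n := by gcongr; linarith

lemma hasDerivAt_exp_mul_zero (r : ℝ) : HasDerivAt (fun θ => exp (r * θ)) r 0 := by
  simpa using ((hasDerivAt_id (0 : ℝ)).const_mul r).exp

lemma eventually_le_exp_of_hasDerivAt {F : ℝ → ℝ} {c : ℝ} (hF0 : F 0 = 1)
    (hF : HasDerivAt F c 0) (ℓ : ℝ) :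
    ∀ᶠ θ in 𝓝[≠] 0, 0 < θ * (ℓ - c) → F θ ≤ exp (ℓ * θ) := by
  rcases eq_or_ne ℓ c with rfl | hℓ
  · exact Eventually.of_forall fun θ h => by simp at h
  set g := fun θ => exp (ℓ * θ) - F θ
  have hg : HasDerivAt g (ℓ - c) 0 := (hasDerivAt_exp_mul_zero ℓ).fun_sub hF
  have hsq : 0 < (ℓ - c) * (ℓ - c) := mul_self_pos.2 (sub_ne_zero.2 hℓ)
  filter_upwards [(hg.tendsto_slope.mul_const (ℓ - c)).eventually (lt_mem_nhds hsq),
    self_mem_nhdsWithin] with θ hslope hθ hpos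
  have hgθ : g θ = slope g 0 θ * θ := by
    rw [slope_def_field, sub_zero, div_mul_cancel₀ _ hθ]
    simp [g, hF0]
  have : 0 < g θ * ((ℓ - c) * (ℓ - c)) := by
    rw [hgθ]
    nlinarith [mul_pos hslope hpos]
  exact sub_nonneg.1 (pos_of_mul_pos_left this hsq.le).le

structure IsParityConductance (ε b b' : ℝ) (μ : ℕ → ℤ → ℤ → ℝ) : Prop where
  supp : ∀ (t : ℕ) (i j : ℤ), 1 < |i - j| → μ t i j = 0
  even : ∀ (t : ℕ) (i : ℤ), Even ((t : ℤ) + i) →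
    μ t i (i - 1) = 1 - ε ∧ μ t i i = b ∧ μ t i (i + 1) = 1 + ε
  odd : ∀ (t : ℕ) (i : ℤ), ¬ Even ((t : ℤ) + i) →
    μ t i (i - 1) = 1 + ε ∧ μ t i i = b' ∧ μ t i (i + 1) = 1 - ε

lemma tsum_eq_nearest_neighbours {α : Type*} [AddCommMonoid α] [TopologicalSpace α]
    {f : ℤ → α} {x : ℤ} (hf : ∀ y, 1 < |x - y| → f y = 0) :
    ∑' y, f y = f (x - 1) + f x + f (x + 1) := by
  rw [tsum_eq_sum (s := {x - 1, x, x + 1}) fun y hy => hf y ?_]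
  · have hx : x - 1 ≠ x + 1 := by omega
    rw [Finset.sum_insert (by simpa using hx), Finset.sum_pair (by simp), add_assoc]
  · simp only [Finset.mem_insert, Finset.mem_singleton, not_or] at hy
    rw [lt_abs]
    omega

namespace IsParityConductance

variable {ε b b' : ℝ} {μ : ℕ → ℤ → ℤ → ℝ}

lemma wdeg_eq (hμ : IsParityConductance ε b b' μ) (t : ℕ) (x : ℤ) :
    wdeg μ t x = (if Even ((t : ℤ) + x) then b else b') + 2 := by
  rw [wdeg, tsum_eq_nearest_neighbours (hμ.supp t x)]
  split_ifs with h
  · obtain ⟨h₁, h₂, h₃⟩ := hμ.even t x h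
    rw [h₁, h₂, h₃]; ring
  · obtain ⟨h₁, h₂, h₃⟩ := hμ.odd t x h
    rw [h₁, h₂, h₃]; ring

lemma stepP_of_even (hμ : IsParityConductance ε b b' μ) {t : ℕ} {x : ℤ}
    (h : Even ((t : ℤ) + x)) :
    stepP μ t x (x - 1) = (1 - ε) / (b + 2) ∧ stepP μ t x x = b / (b + 2) ∧
      stepP μ t x (x + 1) = (1 + ε) / (b + 2) := by
  obtain ⟨h₁, h₂, h₃⟩ := hμ.even t x h
  simp only [stepP, hμ.wdeg_eq, if_pos h, h₁, h₂, h₃, and_self]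

lemma stepP_of_odd (hμ : IsParityConductance ε b b' μ) {t : ℕ} {x : ℤ}
    (h : ¬ Even ((t : ℤ) + x)) :
    stepP μ t x (x - 1) = (1 + ε) / (b' + 2) ∧ stepP μ t x x = b' / (b' + 2) ∧
      stepP μ t x (x + 1) = (1 - ε) / (b' + 2) := by
  obtain ⟨h₁, h₂, h₃⟩ := hμ.odd t x h
  simp only [stepP, hμ.wdeg_eq, if_neg h, h₁, h₂, h₃, and_self]

lemma stepP_eq_zero (hμ : IsParityConductance ε b b' μ) {t : ℕ} {x y : ℤ} (h : 1 < |x - y|) :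
    stepP μ t x y = 0 := by
  rw [stepP, hμ.supp t x y h, zero_div]

lemma stepP_nonneg (hμ : IsParityConductance ε b b' μ) (hε : |ε| ≤ 1) (hb : 0 ≤ b)
    (hb' : 0 ≤ b') (t : ℕ) (x y : ℤ) : 0 ≤ stepP μ t x y := by
  obtain ⟨hε₁, hε₂⟩ := abs_le.1 hε
  by_cases hxy : 1 < |x - y|
  · rw [hμ.stepP_eq_zero hxy]
  have hy : y = x - 1 ∨ y = x ∨ y = x + 1 := by rw [not_lt, abs_le] at hxy; omega
  by_cases h : Even ((t : ℤ) + x)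
  · obtain ⟨h₁, h₂, h₃⟩ := hμ.stepP_of_even h
    rcases hy with rfl | rfl | rfl <;> simp only [h₁, h₂, h₃] <;>
      exact div_nonneg (by linarith) (by linarith)
  · obtain ⟨h₁, h₂, h₃⟩ := hμ.stepP_of_odd h
    rcases hy with rfl | rfl | rfl <;> simp only [h₁, h₂, h₃] <;>
      exact div_nonneg (by linarith) (by linarith)

end IsParityConductance

def parityPotential (d : ℝ) (n : ℕ) (x : ℤ) : ℝ := x + if Even ((n : ℤ) + x) then d else 0

lemma abs_parityPotential_sub_le (d : ℝ) (n : ℕ) (x : ℤ) : |parityPotential d n x - x| ≤ |d| := by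
  unfold parityPotential
  split_ifs <;> simp

lemma parityPotential_succ (d : ℝ) (n : ℕ) (x : ℤ) :
    parityPotential d (n + 1) (x - 1) = x - 1 + (if Even ((n : ℤ) + x) then d else 0) ∧
    parityPotential d (n + 1) x = x + (if Even ((n : ℤ) + x) then 0 else d) ∧
    parityPotential d (n + 1) (x + 1) = x + 1 + (if Even ((n : ℤ) + x) then d else 0) := by
  have h₁ : ((n + 1 : ℕ) : ℤ) + (x - 1) = n + x := by push_cast; ring
  have h₂ : ((n + 1 : ℕ) : ℤ) + x = n + x + 1 := by push_cast; ring
  have h₃ : ((n + 1 : ℕ) : ℤ) + (x + 1) = n + x + 1 + 1 := by push_cast; ring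
  simp only [parityPotential, h₁, h₂, h₃, Int.even_add_one, not_not]
  push_cast
  refine ⟨rfl, ?_, rfl⟩
  split_ifs <;> rfl

/-- `E[exp (θ (Y_{n+1} - Y_n))]` for `Y = parityPotential d`, from a state with `n + X_n` even:
the increments are `-1`, `-d`, `+1`. -/
noncomputable def stepMGFEven (ε b d θ : ℝ) : ℝ :=
  ((1 - ε) * exp (-θ) + b * exp (-(d * θ)) + (1 + ε) * exp θ) / (b + 2)

/-- The same from a state with `n + X_n` odd: the increments are `-1`, `d`, `+1`. -/
noncomputable def stepMGFOdd (ε b' d θ : ℝ) : ℝ :=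
  ((1 + ε) * exp (-θ) + b' * exp (d * θ) + (1 - ε) * exp θ) / (b' + 2)

lemma stepMGFEven_zero (ε d : ℝ) {b : ℝ} (hb : b + 2 ≠ 0) : stepMGFEven ε b d 0 = 1 := by
  rw [stepMGFEven, div_eq_one_iff_eq hb]; simp; ring

lemma stepMGFOdd_zero (ε d : ℝ) {b' : ℝ} (hb' : b' + 2 ≠ 0) : stepMGFOdd ε b' d 0 = 1 := by
  rw [stepMGFOdd, div_eq_one_iff_eq hb']; simp; ring

lemma hasDerivAt_stepMGFEven (ε b d : ℝ) :
    HasDerivAt (stepMGFEven ε b d) ((2 * ε - b * d) / (b + 2)) 0 := by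
  have h := ((((hasDerivAt_exp_mul_zero (-1)).const_mul (1 - ε)).fun_add
    ((hasDerivAt_exp_mul_zero (-d)).const_mul b)).fun_add
    ((hasDerivAt_exp_mul_zero 1).const_mul (1 + ε))).div_const (b + 2)
  have e : stepMGFEven ε b d = fun θ =>
      ((1 - ε) * exp (-1 * θ) + b * exp (-d * θ) + (1 + ε) * exp (1 * θ)) / (b + 2) := by
    ext θ; simp [stepMGFEven]
  rw [e]
  exact h.congr_deriv (by ring)

lemma hasDerivAt_stepMGFOdd (ε b' d : ℝ) :
    HasDerivAt (stepMGFOdd ε b' d) ((b' * d - 2 * ε) / (b' + 2)) 0 := by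
  have h := ((((hasDerivAt_exp_mul_zero (-1)).const_mul (1 + ε)).fun_add
    ((hasDerivAt_exp_mul_zero d).const_mul b')).fun_add
    ((hasDerivAt_exp_mul_zero 1).const_mul (1 - ε))).div_const (b' + 2)
  have e : stepMGFOdd ε b' d = fun θ =>
      ((1 + ε) * exp (-1 * θ) + b' * exp (d * θ) + (1 - ε) * exp (1 * θ)) / (b' + 2) := by
    ext θ; simp [stepMGFOdd]
  rw [e]
  exact h.congr_deriv (by ring)

noncomputable def driftSpeed (ε b b' : ℝ) : ℝ :=
  ε * (b' / (b' + 2) - b / (b + 2)) / (b' / (b' + 2) + b / (b + 2))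

/-- The value of `d` for which `stepMGFEven` and `stepMGFOdd` have the same derivative at `0`
(`driftSpeed_eq_even`, `driftSpeed_eq_odd`), i.e. for which `parityPotential d n X_n` has
mean increment `driftSpeed` whatever the parity. -/
noncomputable def parityCorrector (ε b b' : ℝ) : ℝ := ε * (b + b' + 4) / (b * b' + b + b')

section Speed

variable {ε b b' : ℝ} (hb : 0 ≤ b) (hbb' : b < b')
include hb hbb'

lemma parityCorrector_denom_pos : 0 < b * b' + b + b' := by nlinarith

lemma driftSpeed_eq : driftSpeed ε b b' = ε * (b' - b) / (b * b' + b + b') := by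
  have hb₂ : b + 2 ≠ 0 := by linarith
  have hb'₂ : b' + 2 ≠ 0 := by linarith
  have hγ : 0 < b' * (b + 2) + (b' + 2) * b := by nlinarith
  rw [driftSpeed, div_add_div _ _ hb'₂ hb₂, div_sub_div _ _ hb'₂ hb₂, mul_div_assoc',
    div_div_div_cancel_right₀ (mul_ne_zero hb'₂ hb₂),
    div_eq_div_iff hγ.ne' (parityCorrector_denom_pos hb hbb').ne']
  ring

lemma driftSpeed_pos (hε : 0 < ε) : 0 < driftSpeed ε b b' := by
  rw [driftSpeed_eq hb hbb']
  exact div_pos (mul_pos hε (by linarith)) (parityCorrector_denom_pos hb hbb')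

lemma driftSpeed_eq_even :
    (2 * ε - b * parityCorrector ε b b') / (b + 2) = driftSpeed ε b b' := by
  have hD := (parityCorrector_denom_pos hb hbb').ne'
  rw [driftSpeed_eq hb hbb', parityCorrector, div_eq_div_iff (by linarith) hD, sub_mul,
    mul_assoc b, div_mul_cancel₀ _ hD]
  ring

lemma driftSpeed_eq_odd :
    (b' * parityCorrector ε b b' - 2 * ε) / (b' + 2) = driftSpeed ε b b' := by
  have hD := (parityCorrector_denom_pos hb hbb').ne'
  rw [driftSpeed_eq hb hbb', parityCorrector, div_eq_div_iff (by linarith) hD, sub_mul,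
    mul_assoc b', div_mul_cancel₀ _ hD]
  ring

end Speed

lemma exists_exp_tilt {ε b b' ℓ : ℝ} (hb : 0 ≤ b) (hbb' : b < b') (hℓ : ℓ ≠ driftSpeed ε b b') :
    ∃ θ, 0 < θ * (ℓ - driftSpeed ε b b') ∧
      stepMGFEven ε b (parityCorrector ε b b') θ ≤ exp (ℓ * θ) ∧
      stepMGFOdd ε b' (parityCorrector ε b b') θ ≤ exp (ℓ * θ) := by
  have hE := eventually_le_exp_of_hasDerivAt (stepMGFEven_zero ε _ (by linarith))
    (driftSpeed_eq_even hb hbb' ▸ hasDerivAt_stepMGFEven ε b _) ℓ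
  have hO := eventually_le_exp_of_hasDerivAt (stepMGFOdd_zero ε _ (by linarith))
    (driftSpeed_eq_odd hb hbb' ▸ hasDerivAt_stepMGFOdd ε b' _) ℓ
  have hside : ∃ᶠ θ in 𝓝[≠] (0 : ℝ), 0 < θ * (ℓ - driftSpeed ε b b') := by
    rcases (sub_ne_zero.2 hℓ).lt_or_gt with h | h
    · have hneg : ∀ᶠ θ in 𝓝[<] (0 : ℝ), θ < 0 := self_mem_nhdsWithin
      exact (hneg.mono fun θ hθ => mul_pos_of_neg_of_neg hθ h).frequently.filter_mono
        (nhdsLT_le_nhdsNE 0)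
    · have hpos : ∀ᶠ θ in 𝓝[>] (0 : ℝ), 0 < θ := self_mem_nhdsWithin
      exact (hpos.mono fun θ hθ => mul_pos hθ h).frequently.filter_mono (nhdsGT_le_nhdsNE 0)
  obtain ⟨θ, hθ, hEθ, hOθ⟩ := (hside.and_eventually (hE.and hO)).exists
  exact ⟨θ, hθ, hEθ hθ, hOθ hθ⟩

namespace IsParityConductance

variable {ε b b' : ℝ} {μ : ℕ → ℤ → ℤ → ℝ}

lemma tsum_stepP_mul_exp_parityPotential_le (hμ : IsParityConductance ε b b' μ) (hε : |ε| ≤ 1)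
    (hb : 0 ≤ b) (hb' : 0 ≤ b') {d θ ℓ : ℝ} (hE : stepMGFEven ε b d θ ≤ exp (ℓ * θ))
    (hO : stepMGFOdd ε b' d θ ≤ exp (ℓ * θ)) (n : ℕ) (x : ℤ) :
    ∑' y, ENNReal.ofReal (stepP μ n x y) * ENNReal.ofReal (exp (θ * parityPotential d (n + 1) y)) ≤
      ENNReal.ofReal (exp (θ * (parityPotential d n x + ℓ))) := by
  have hq := hμ.stepP_nonneg hε hb hb' n x
  have hp (y : ℤ) (s : ℝ) : 0 ≤ stepP μ n x y * exp s := mul_nonneg (hq y) (exp_pos s).le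
  rw [tsum_eq_nearest_neighbours fun y hy => by
      rw [hμ.stepP_eq_zero hy, ENNReal.ofReal_zero, zero_mul],
    ← ENNReal.ofReal_mul (hq _), ← ENNReal.ofReal_mul (hq _), ← ENNReal.ofReal_mul (hq _),
    ← ENNReal.ofReal_add (hp _ _) (hp _ _), ← ENNReal.ofReal_add (add_nonneg (hp _ _) (hp _ _))
      (hp _ _)]
  refine ENNReal.ofReal_le_ofReal ?_
  obtain ⟨h₁, h₂, h₃⟩ := parityPotential_succ d n x
  rw [h₁, h₂, h₃, parityPotential]
  have hshift (u v : ℝ) : exp (θ * u) = exp (θ * (u - v)) * exp (θ * v) := by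
    rw [← exp_add]; ring_nf
  by_cases h : Even ((n : ℤ) + x)
  · obtain ⟨p₁, p₂, p₃⟩ := hμ.stepP_of_even h
    simp only [p₁, p₂, p₃, if_pos h, add_zero]
    calc _ = stepMGFEven ε b d θ * exp (θ * (x + d)) := by
          rw [hshift (x - 1 + d) (x + d), hshift x (x + d), hshift (x + 1 + d) (x + d), stepMGFEven]
          ring_nf
      _ ≤ exp (ℓ * θ) * exp (θ * (x + d)) := mul_le_mul_of_nonneg_right hE (exp_pos _).le
      _ = _ := by rw [← exp_add]; ring_nf
  · obtain ⟨p₁, p₂, p₃⟩ := hμ.stepP_of_odd h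
    simp only [p₁, p₂, p₃, if_neg h, add_zero]
    calc _ = stepMGFOdd ε b' d θ * exp (θ * x) := by
          rw [hshift (x - 1) x, hshift (x + d) x, hshift (x + 1) x, stepMGFOdd]
          ring_nf
      _ ≤ exp (ℓ * θ) * exp (θ * x) := mul_le_mul_of_nonneg_right hO (exp_pos _).le
      _ = _ := by rw [← exp_add]; ring_nf

lemma ae_eventually_sub_mul_sub_neg (hμ : IsParityConductance ε b b' μ) (hε : |ε| ≤ 1)
    (hb : 0 ≤ b) (hbb' : b < b') {Ω : Type*} [MeasurableSpace Ω] {P : Measure Ω}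
    {X : ℕ → Ω → ℤ} {x₀ : ℤ} (hX : IsWalkLaw μ P X x₀) (κ : ℝ) (hκ : κ ≠ driftSpeed ε b b') :
    ∀ᵐ ω ∂P, ∀ᶠ n : ℕ in atTop, (κ - driftSpeed ε b b') * (X n ω - κ * n) < 0 := by
  have hb' : 0 ≤ b' := hb.trans hbb'.le
  obtain ⟨θ, hθ, hE, hO⟩ := exists_exp_tilt (ε := ε) hb hbb' (ℓ := (κ + driftSpeed ε b b') / 2)
    (by contrapose! hκ; linarith)
  have hθκ : 0 < θ * (κ - driftSpeed ε b b') := by linarith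
  have hlt := hX.ae_eventually_mul_lt (hμ.stepP_nonneg hε hb hb') (abs_parityPotential_sub_le _)
    (hμ.tsum_stepP_mul_exp_parityPotential_le hε hb hb' hE hO) (κ := κ) (by linarith)
  filter_upwards [hlt] with ω hω
  refine hω.mono fun n hn => neg_of_mul_neg_right ?_ (sq_nonneg θ)
  linarith [mul_neg_of_pos_of_neg hθκ (by linarith : θ * (X n ω - κ * n) < 0)]

end IsParityConductance

theorem stmt1_general (ε b b' : ℝ) (hε0 : 0 < ε) (hε1 : ε < 1) (hb : 0 ≤ b) (hbb' : b < b')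
    (μ : ℕ → ℤ → ℤ → ℝ)
    (hsupp : ∀ (t : ℕ) (i j : ℤ), 1 < |i - j| → μ t i j = 0)
    (heven : ∀ (t : ℕ) (i : ℤ), Even ((t : ℤ) + i) →
      μ t i (i - 1) = 1 - ε ∧ μ t i i = b ∧ μ t i (i + 1) = 1 + ε)
    (hodd : ∀ (t : ℕ) (i : ℤ), ¬ Even ((t : ℤ) + i) →
      μ t i (i - 1) = 1 + ε ∧ μ t i i = b' ∧ μ t i (i + 1) = 1 - ε)
    {Ω : Type*} [MeasurableSpace Ω] (P : Measure Ω)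
    (X : ℕ → Ω → ℤ) (hX : IsWalkLaw μ P X 0) :
    0 < ε * (b' / (b' + 2) - b / (b + 2)) / (b' / (b' + 2) + b / (b + 2)) ∧
    ∀ᵐ ω ∂P, Tendsto (fun t : ℕ => (X t ω : ℝ) / t) atTop
      (nhds (ε * (b' / (b' + 2) - b / (b + 2)) / (b' / (b' + 2) + b / (b + 2)))) := by
  have hμ : IsParityConductance ε b b' μ := ⟨hsupp, heven, hodd⟩
  have hε : |ε| ≤ 1 := abs_le.2 ⟨by linarith, hε1.le⟩
  exact ⟨driftSpeed_pos hb hbb' hε0,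
    ae_tendsto_div_of_eventually (hμ.ae_eventually_sub_mul_sub_neg hε hb hbb' hX)⟩

/-- For the conductances on `ℤ` given by
`μ^{(t)}(i,i-1) = 1-ε`, `μ^{(t)}(i,i) = b`, `μ^{(t)}(i,i+1) = 1+ε` when `t+i` is even, and
`μ^{(t)}(i,i-1) = 1+ε`, `μ^{(t)}(i,i) = b'`, `μ^{(t)}(i,i+1) = 1-ε` when `t+i` is odd
(with `0 ≤ b < b'`, `ε ∈ (0,1)`, and writing `γ = b/(b+2)`, `γ' = b'/(b'+2)`),
the discrete-time random walk started at `0` satisfies, almost surely,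
`X_t/t → ε(γ'-γ)/(γ'+γ) > 0`. -/
theorem stmt1 (ε b b' : ℝ) (hε0 : 0 < ε) (hε1 : ε < 1) (hb : 0 ≤ b) (hbb' : b < b')
    (μ : ℕ → ℤ → ℤ → ℝ)
    (hsupp : ∀ (t : ℕ) (i j : ℤ), 1 < |i - j| → μ t i j = 0)
    (heven : ∀ (t : ℕ) (i : ℤ), Even ((t : ℤ) + i) →
      μ t i (i - 1) = 1 - ε ∧ μ t i i = b ∧ μ t i (i + 1) = 1 + ε)
    (hodd : ∀ (t : ℕ) (i : ℤ), ¬ Even ((t : ℤ) + i) →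
      μ t i (i - 1) = 1 + ε ∧ μ t i i = b' ∧ μ t i (i + 1) = 1 - ε)
    {Ω : Type*} [MeasurableSpace Ω] (P : Measure Ω) [IsProbabilityMeasure P]
    (X : ℕ → Ω → ℤ) (hX : IsWalkLaw μ P X 0) :
    0 < ε * (b' / (b' + 2) - b / (b + 2)) / (b' / (b' + 2) + b / (b + 2)) ∧
    ∀ᵐ ω ∂P, Tendsto (fun t : ℕ => (X t ω : ℝ) / t) atTop
      (nhds (ε * (b' / (b' + 2) - b / (b + 2)) / (b' / (b' + 2) + b / (b + 2)))) :=
  stmt1_general ε b b' hε0 hε1 hb hbb' μ hsupp heven hodd P X hX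
end

section
/- Fix ε ∈ (0,1) and real numbers 0 ≤ b < b′, and define the time-dependent conductances on ℤ by μ^{(t)}(i,i−1)=1−ε, μ^{(t)}(i,i)=b, μ^{(t)}(i,i+1)=1+ε when t+i is even, and μ^{(t)}(i,i−1)=1+ε, μ^{(t)}(i,i)=b′, μ^{(t)}(i,i+1)=1−ε when t+i is odd. Then for the discrete-time random walk (X_t) among these conductances started at 0 there exist constants C < ∞ and c > 0 such that P(X_t = 0) ≤ C e^{−ct} for all t ≥ 1. In particular, there is no constant c₆ > 0 with P(X_t = 0) ≥ c₆ t^{−1/2} for all t ≥ 1, i.e. the Gaussian on-diagonal heat kernel lower bound fails for this walk. -/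
open MeasureTheory Filter

/-! ### Auxiliary lemmas -/

lemma exp_ub' (x : ℝ) (h0 : 0 ≤ x) (h1 : x ≤ 1) : Real.exp x ≤ 1 + x + x^2 := by
  have := Real.exp_bound (x := x) (by rw [abs_of_nonneg h0]; exact h1) (n := 2) (by norm_num)
  have h := abs_le.1 this
  simp [Finset.sum_range_succ] at h
  nlinarith [h.2, sq_nonneg x]

lemma exp_neg_ub' (x : ℝ) (h0 : 0 ≤ x) (h1 : x ≤ 1) : Real.exp (-x) ≤ 1 - x + x^2 := by
  have := Real.exp_bound (x := -x) (by rw [abs_neg, abs_of_nonneg h0]; exact h1) (n := 2)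
    (by norm_num)
  have h := abs_le.1 this
  simp [Finset.sum_range_succ, abs_neg, abs_of_nonneg h0] at h
  nlinarith [h.2, sq_nonneg x]

set_option maxHeartbeats 1000000 in
/-- The key spectral/Lyapunov estimate: existence of a tilt `L`, a parity weight `1+th`
and a gap `de` making the tilted kernel strictly contracting. -/
lemma arith_core (ε b b' : ℝ) (hε0 : 0 < ε) (hε1 : ε < 1) (hb : 0 ≤ b) (hbb' : b < b') :
    ∃ L th de : ℝ, 0 < L ∧ 0 < th ∧ 0 < de ∧ de < 1 ∧
      (1-ε)*Real.exp L + (1+ε)*Real.exp (-L) + b*(1+th) ≤ (1-de)*(2+b) ∧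
      ((1+ε)*Real.exp L + (1-ε)*Real.exp (-L))*(1+th) + b' ≤ (1-de)*(2+b')*(1+th) := by
  have hD : (0:ℝ) < b' - b := by linarith
  have hW : (0:ℝ) < b + b' := by linarith
  have hW1 : (0:ℝ) < 1 + b + b' := by linarith
  have hb2 : (0:ℝ) < 2 + b := by linarith
  have hb'2 : (0:ℝ) < 2 + b' := by linarith
  have hDW : b' - b ≤ b + b' := by linarith
  obtain ⟨L, hL0, hL2, hLq⟩ : ∃ L : ℝ, 0 < L ∧ L ≤ 1 ∧ 20*(1+b+b')*L = ε*(b'-b) := by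
    refine ⟨ε*(b'-b)/(20*(1+b+b')), by positivity, ?_, by field_simp⟩
    rw [div_le_one (by positivity)]; nlinarith
  obtain ⟨th, hth0, hthq⟩ : ∃ th : ℝ, 0 < th ∧ th*(b+b') = 4*ε*L :=
    ⟨4*ε*L/(b+b'), by positivity, by field_simp⟩
  obtain ⟨de, hde0, hdeq⟩ : ∃ de : ℝ, 0 < de ∧ de*(2*(b+b')*(2+b)*(2+b')) = ε*L*(b'-b) :=
    ⟨ε*L*(b'-b)/(2*(b+b')*(2+b)*(2+b')), by positivity, by field_simp⟩
  have hexp1 : Real.exp L ≤ 1 + L + L^2 := exp_ub' L hL0.le hL2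
  have hexp2 : Real.exp (-L) ≤ 1 - L + L^2 := exp_neg_ub' L hL0.le hL2
  have hE : (0:ℝ) ≤ ε*L*(b'-b) := by positivity
  have d1 : ε*L*(b'-b) = 20*(1+b+b')*L^2 := by linear_combination L * hLq.symm
  have d2a : 20*(b+b')*(1+b+b')*th = 4*ε^2*(b'-b) := by
    linear_combination (20*(1+b+b'))*hthq + (4*ε)*hLq
  have he2 : ε^2 ≤ 1 := by nlinarith
  have d2 : th ≤ 1/5 := by
    have hpos : (0:ℝ) < 20*(b+b')*(1+b+b') := by positivity
    have : th * (20*(b+b')*(1+b+b')) ≤ (1/5) * (20*(b+b')*(1+b+b')) := by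
      nlinarith [d2a, mul_nonneg (sub_nonneg.2 he2) hD.le, mul_pos hW hW1]
    exact le_of_mul_le_mul_right this hpos
  have hde1 : de < 1 := by
    have hpos : (0:ℝ) < 2*(b+b')*(2+b)*(2+b') := by positivity
    have h4 : (4:ℝ) ≤ (2+b)*(2+b') := by nlinarith
    have : de * (2*(b+b')*(2+b)*(2+b')) < 1 * (2*(b+b')*(2+b)*(2+b')) := by
      rw [hdeq]
      nlinarith [mul_nonneg hW.le (sub_nonneg.2 h4), hDW,
        mul_nonneg hD.le (show (0:ℝ) ≤ 1 - ε*L by nlinarith)]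
    exact lt_of_mul_lt_mul_right this hpos.le
  have hA : b*th*(b+b') = 2*ε*L*(b+b') - 2*ε*L*(b'-b) := by linear_combination b*hthq
  have hA' : th*b'*(b+b') = 2*ε*L*(b+b') + 2*ε*L*(b'-b) := by linear_combination b'*hthq
  have hB : 4*(de*(2+b)*(b+b')) ≤ ε*L*(b'-b) := by
    have idB : ε*L*(b'-b) - 4*(de*(2+b)*(b+b')) = 2*(de*((2+b)*((b+b')*b'))) := by
      linear_combination -hdeq
    have : (0:ℝ) ≤ de*((2+b)*((b+b')*b')) :=
      mul_nonneg hde0.le (mul_nonneg hb2.le (mul_nonneg hW.le (by linarith)))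
    linarith
  have hB' : 4*(de*(2+b')*(b+b')) ≤ ε*L*(b'-b) := by
    have idB' : ε*L*(b'-b) - 4*(de*(2+b')*(b+b')) = 2*(de*((2+b')*((b+b')*b))) := by
      linear_combination -hdeq
    have : (0:ℝ) ≤ de*((2+b')*((b+b')*b)) :=
      mul_nonneg hde0.le (mul_nonneg hb'2.le (mul_nonneg hW.le hb))
    linarith
  have hC : 10*(2*L^2*(b+b')) ≤ ε*L*(b'-b) := by
    have idC : ε*L*(b'-b) - 10*(2*L^2*(b+b')) = 20*L^2 := by linear_combination d1
    linarith [sq_nonneg L]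
  have key1 : 2*L^2 + b*th + de*(2+b) ≤ 2*ε*L := by
    have goalW : (2*L^2 + b*th + de*(2+b))*(b+b') ≤ (2*ε*L)*(b+b') := by
      have expand : (2*L^2 + b*th + de*(2+b))*(b+b') =
          2*L^2*(b+b') + b*th*(b+b') + de*(2+b)*(b+b') := by ring
      linarith [hA, hB, hC, hE, expand]
    exact le_of_mul_le_mul_right goalW hW
  have hF : 5*(2*ε*L*th*(b+b')) ≤ 2*(ε*L*(b'-b)) := by
    have h8 : 2*ε*L*th*(b+b') = 8*ε^2*L^2 := by linear_combination (2*ε*L)*hthq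
    linarith [h8, d1, mul_nonneg (sub_nonneg.2 he2) (sq_nonneg L),
      mul_nonneg hW.le (sq_nonneg L)]
  have key2 : (de*(2+b') + 2*ε*L + 2*L^2)*(1+th) ≤ th*b' := by
    have h15 : (0:ℝ) ≤ 1 + th := by linarith
    have h65 : 1 + th ≤ 6/5 := by linarith
    have m1 : (de*(2+b')*(b+b'))*(1+th) ≤ (ε*L*(b'-b)/4)*(6/5) :=
      mul_le_mul (by linarith) h65 h15 (by positivity)
    have m2 : (2*L^2*(b+b'))*(1+th) ≤ (ε*L*(b'-b)/10)*(6/5) :=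
      mul_le_mul (by linarith) h65 h15 (by positivity)
    have goalW : ((de*(2+b') + 2*ε*L + 2*L^2)*(1+th))*(b+b') ≤ (th*b')*(b+b') := by
      linarith [m1, m2, hF, hA', hE]
    exact le_of_mul_le_mul_right goalW hW
  refine ⟨L, th, de, hL0, hth0, hde0, hde1, ?_, ?_⟩
  · linarith [key1, mul_le_mul_of_nonneg_left hexp1 (show (0:ℝ) ≤ 1-ε by linarith),
      mul_le_mul_of_nonneg_left hexp2 (show (0:ℝ) ≤ 1+ε by linarith)]
  · have hsum : (1+ε)*Real.exp L + (1-ε)*Real.exp (-L) ≤ 2 + 2*ε*L + 2*L^2 := by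
      linarith [mul_le_mul_of_nonneg_left hexp1 (show (0:ℝ) ≤ 1+ε by linarith),
        mul_le_mul_of_nonneg_left hexp2 (show (0:ℝ) ≤ 1-ε by linarith)]
    have := mul_le_mul_of_nonneg_right hsum (show (0:ℝ) ≤ 1+th by linarith)
    linarith [key2, this]

/-! ### The discrete forward equation -/

/-- Forward kernel iterate: `Fk q t x` bounds the probability of being at `x` at time `t`. -/
noncomputable def Fk (q : ℕ → ℤ → ℤ → ℝ) : ℕ → ℤ → ℝ
  | 0, x => if x = 0 then 1 else 0
  | (t+1), y => Fk q t (y-1) * q t (y-1) y + Fk q t y * q t y y + Fk q t (y+1) * q t (y+1) y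

lemma Fk_nonneg (q : ℕ → ℤ → ℤ → ℝ) (hq : ∀ t x y, 0 ≤ q t x y) : ∀ t x, 0 ≤ Fk q t x := by
  intro t
  induction t with
  | zero => intro x; simp [Fk]; split <;> norm_num
  | succ t ih =>
    intro x
    simp only [Fk]
    have := ih (x-1); have := ih x; have := ih (x+1)
    have := hq t (x-1) x; have := hq t x x; have := hq t (x+1) x
    positivity

lemma Fk_zero (q : ℕ → ℤ → ℤ → ℝ) : ∀ (t : ℕ) (x : ℤ), (t:ℤ) < |x| → Fk q t x = 0 := by
  intro t
  induction t with
  | zero =>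
    intro x hx; rw [lt_abs] at hx; simp [Fk]; omega
  | succ t ih =>
    intro x hx
    rw [lt_abs] at hx
    simp only [Fk]
    rw [ih (x-1) (by rw [lt_abs]; omega), ih x (by rw [lt_abs]; omega),
      ih (x+1) (by rw [lt_abs]; omega)]
    ring

section chain
variable (q : ℕ → ℤ → ℤ → ℝ) (hq : ∀ t x y, 0 ≤ q t x y)
  (V : ℕ → ℤ → ℝ) (ρ : ℝ)
  (hV : ∀ t x, 0 ≤ V t x)
  (hρ : 0 ≤ ρ)
  (hkey : ∀ t x, q t x (x-1) * V (t+1) (x-1) + q t x x * V (t+1) x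
      + q t x (x+1) * V (t+1) (x+1) ≤ ρ * V t x)

noncomputable def Phi (t : ℕ) : ℝ := ∑ x ∈ Finset.Icc (-(t:ℤ)) t, Fk q t x * V t x

include hq hV hρ hkey in
lemma Phi_succ_le (t : ℕ) : Phi q V (t+1) ≤ ρ * Phi q V t := by
  have expand : Phi q V (t+1) =
      (∑ y ∈ Finset.Icc (-(t:ℤ)-1) (t+1), Fk q t (y-1) * q t (y-1) y * V (t+1) y)
      + (∑ y ∈ Finset.Icc (-(t:ℤ)-1) (t+1), Fk q t y * q t y y * V (t+1) y)
      + (∑ y ∈ Finset.Icc (-(t:ℤ)-1) (t+1), Fk q t (y+1) * q t (y+1) y * V (t+1) y) := by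
    rw [Phi, ← Finset.sum_add_distrib, ← Finset.sum_add_distrib]
    apply Finset.sum_congr
    · congr 1 <;> push_cast <;> ring
    · intro y _; simp only [Fk]; ring
  have s1 : (∑ y ∈ Finset.Icc (-(t:ℤ)-1) (t+1), Fk q t (y-1) * q t (y-1) y * V (t+1) y)
      = ∑ x ∈ Finset.Icc (-(t:ℤ)) t, Fk q t x * (q t x (x+1) * V (t+1) (x+1)) := by
    rw [show (∑ y ∈ Finset.Icc (-(t:ℤ)-1) (t+1), Fk q t (y-1) * q t (y-1) y * V (t+1) y)
        = ∑ y ∈ Finset.Icc (-(t:ℤ)+1) (t+1), Fk q t (y-1) * q t (y-1) y * V (t+1) y from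
      (Finset.sum_subset (Finset.Icc_subset_Icc (by omega) le_rfl) (fun y hy hy' => by
        rw [Fk_zero q t (y-1) (by simp [Finset.mem_Icc] at hy hy' ⊢; rw [lt_abs]; omega)]
        ring)).symm]
    rw [show Finset.Icc (-(t:ℤ)+1) ((t:ℤ)+1) =
        (Finset.Icc (-(t:ℤ)) (t:ℤ)).map (addRightEmbedding 1) by
      rw [Finset.map_add_right_Icc], Finset.sum_map]
    apply Finset.sum_congr rfl
    intro x _
    simp [addRightEmbedding]
    ring
  have s2 : (∑ y ∈ Finset.Icc (-(t:ℤ)-1) (t+1), Fk q t y * q t y y * V (t+1) y)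
      = ∑ x ∈ Finset.Icc (-(t:ℤ)) t, Fk q t x * (q t x x * V (t+1) x) := by
    rw [show (∑ y ∈ Finset.Icc (-(t:ℤ)-1) (t+1), Fk q t y * q t y y * V (t+1) y)
        = ∑ y ∈ Finset.Icc (-(t:ℤ)) t, Fk q t y * q t y y * V (t+1) y from
      (Finset.sum_subset (Finset.Icc_subset_Icc (by omega) (by omega)) (fun y hy hy' => by
        rw [Fk_zero q t y (by simp [Finset.mem_Icc] at hy hy' ⊢; rw [lt_abs]; omega)]
        ring)).symm]
    exact Finset.sum_congr rfl (fun x _ => by ring)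
  have s3 : (∑ y ∈ Finset.Icc (-(t:ℤ)-1) (t+1), Fk q t (y+1) * q t (y+1) y * V (t+1) y)
      = ∑ x ∈ Finset.Icc (-(t:ℤ)) t, Fk q t x * (q t x (x-1) * V (t+1) (x-1)) := by
    rw [show (∑ y ∈ Finset.Icc (-(t:ℤ)-1) (t+1), Fk q t (y+1) * q t (y+1) y * V (t+1) y)
        = ∑ y ∈ Finset.Icc (-(t:ℤ)-1) (t-1), Fk q t (y+1) * q t (y+1) y * V (t+1) y from
      (Finset.sum_subset (Finset.Icc_subset_Icc le_rfl (by omega)) (fun y hy hy' => by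
        rw [Fk_zero q t (y+1) (by simp [Finset.mem_Icc] at hy hy' ⊢; rw [lt_abs]; omega)]
        ring)).symm]
    rw [show Finset.Icc (-(t:ℤ)-1) ((t:ℤ)-1) =
        (Finset.Icc (-(t:ℤ)) (t:ℤ)).map (addRightEmbedding (-1)) by
      rw [Finset.map_add_right_Icc]; congr 1 <;> ring, Finset.sum_map]
    apply Finset.sum_congr rfl
    intro x _
    simp [addRightEmbedding, sub_eq_add_neg]
    ring
  rw [expand, s1, s2, s3, ← Finset.sum_add_distrib, ← Finset.sum_add_distrib, Phi,
    Finset.mul_sum]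
  apply Finset.sum_le_sum
  intro x _
  have h := hkey t x
  have hFx := Fk_nonneg q hq t x
  calc Fk q t x * (q t x (x+1) * V (t+1) (x+1)) + Fk q t x * (q t x x * V (t+1) x)
        + Fk q t x * (q t x (x-1) * V (t+1) (x-1))
      = Fk q t x * (q t x (x-1) * V (t+1) (x-1) + q t x x * V (t+1) x
          + q t x (x+1) * V (t+1) (x+1)) := by ring
    _ ≤ Fk q t x * (ρ * V t x) := mul_le_mul_of_nonneg_left h hFx
    _ = ρ * (Fk q t x * V t x) := by ring

include hq hV hρ hkey in
lemma Fk_le_pow (hV00 : V 0 0 = 1) (hVt0 : ∀ t, 1 ≤ V t 0) (t : ℕ) :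
    Fk q t 0 ≤ ρ^t := by
  have hPhi : ∀ t, Phi q V t ≤ ρ^t := by
    intro t
    induction t with
    | zero => simp [Phi, Fk, hV00]
    | succ t ih =>
      calc Phi q V (t+1) ≤ ρ * Phi q V t := Phi_succ_le q hq V ρ hV hρ hkey t
        _ ≤ ρ * ρ^t := mul_le_mul_of_nonneg_left ih hρ
        _ = ρ^(t+1) := by ring
  have h0mem : (0:ℤ) ∈ Finset.Icc (-(t:ℤ)) t := by simp
  have hsingle : Fk q t 0 * V t 0 ≤ Phi q V t :=
    Finset.single_le_sum (f := fun x => Fk q t x * V t x)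
      (fun x _ => mul_nonneg (Fk_nonneg q hq t x) (hV t x)) h0mem
  have : Fk q t 0 ≤ Fk q t 0 * V t 0 := by
    nlinarith [Fk_nonneg q hq t 0, hVt0 t]
  linarith [hPhi t]
end chain

/-! ### Path sums -/

section comb
variable (q : ℕ → ℤ → ℤ → ℝ) (hq : ∀ t x y, 0 ≤ q t x y)
  (hvan : ∀ (t : ℕ) (x y : ℤ), 1 < |x - y| → q t x y = 0)

/-- path weight -/
noncomputable def pw (t : ℕ) (p : ℕ → ℤ) : ℝ :=
  (if p 0 = 0 then (1:ℝ) else 0) * ∏ s ∈ Finset.range t, q s (p s) (p (s+1))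

include hq in
lemma pw_nonneg (t : ℕ) (p : ℕ → ℤ) : 0 ≤ pw q t p := by
  unfold pw
  apply mul_nonneg
  · split <;> norm_num
  · exact Finset.prod_nonneg fun s _ => hq s _ _

include hq hvan in
lemma sum_pw_le : ∀ (t : ℕ) (y : ℤ) (Q : Finset (ℕ → ℤ)),
    (∀ p ∈ Q, p t = y ∧ ∀ s, t < s → p s = 0) →
    ∑ p ∈ Q, pw q t p ≤ Fk q t y := by
  intro t
  induction t with
  | zero =>
    intro y Q hQ
    by_cases hy : y = 0
    · subst hy
      have hsub : Q ⊆ {fun s => if s = 0 then (0:ℤ) else 0} := by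
        intro p hp
        obtain ⟨h1, h2⟩ := hQ p hp
        simp only [Finset.mem_singleton]
        funext s
        cases s with
        | zero => simpa using h1
        | succ n => simpa using h2 (n+1) (by omega)
      have hcard : Q.card ≤ 1 := by
        simpa using Finset.card_le_card hsub
      have hone : ∀ p ∈ Q, pw q 0 p ≤ 1 := by
        intro p hp
        unfold pw
        simp only [Finset.range_zero, Finset.prod_empty, mul_one]
        split <;> norm_num
      calc ∑ p ∈ Q, pw q 0 p ≤ Q.card • (1:ℝ) := Finset.sum_le_card_nsmul Q _ 1 hone
        _ ≤ 1 := by simp; exact_mod_cast hcard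
        _ = Fk q 0 0 := by simp [Fk]
    · have : ∀ p ∈ Q, pw q 0 p = 0 := by
        intro p hp
        have h1 := (hQ p hp).1
        unfold pw
        rw [if_neg (by rw [h1]; exact hy)]
        ring
      rw [Finset.sum_congr rfl this]
      simp [Fk, hy]
  | succ t ih =>
    intro y Q hQ
    classical
    set trunc : (ℕ → ℤ) → (ℕ → ℤ) := fun p s => if s ≤ t then p s else 0 with htrunc
    have hw : ∀ p ∈ Q, pw q (t+1) p = pw q t (trunc p) * q t (p t) y := by
      intro p hp
      obtain ⟨h1, _⟩ := hQ p hp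
      unfold pw
      rw [Finset.prod_range_succ, h1]
      have e0 : trunc p 0 = p 0 := by simp [htrunc]
      have eprod : ∏ s ∈ Finset.range t, q s (trunc p s) (trunc p (s+1))
          = ∏ s ∈ Finset.range t, q s (p s) (p (s+1)) := by
        apply Finset.prod_congr rfl
        intro s hs
        simp only [Finset.mem_range] at hs
        rw [show trunc p s = p s by simp [htrunc]; omega,
          show trunc p (s+1) = p (s+1) by simp [htrunc]; omega]
      rw [e0, eprod]; ring
    rw [Finset.sum_congr rfl hw]
    rw [← Finset.sum_fiberwise_of_maps_to (g := fun p => p t)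
      (t := Q.image (fun p => p t)) (fun p hp => Finset.mem_image_of_mem _ hp)]
    have inner : ∀ x ∈ Q.image (fun p => p t),
        ∑ p ∈ Q.filter (fun p => p t = x), pw q t (trunc p) * q t (p t) y
          ≤ Fk q t x * q t x y := by
      intro x _
      have : ∑ p ∈ Q.filter (fun p => p t = x), pw q t (trunc p) * q t (p t) y
          = (∑ p ∈ Q.filter (fun p => p t = x), pw q t (trunc p)) * q t x y := by
        rw [Finset.sum_mul]
        apply Finset.sum_congr rfl
        intro p hp
        rw [(Finset.mem_filter.1 hp).2]
      rw [this]
      apply mul_le_mul_of_nonneg_right _ (hq t x y)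
      have himg : ∑ p ∈ Q.filter (fun p => p t = x), pw q t (trunc p)
          = ∑ p' ∈ (Q.filter (fun p => p t = x)).image trunc, pw q t p' := by
        rw [Finset.sum_image]
        intro p hp p' hp' heq
        obtain ⟨hpQ, hpx⟩ := Finset.mem_filter.1 hp
        obtain ⟨hp'Q, hp'x⟩ := Finset.mem_filter.1 hp'
        obtain ⟨hy1, hz1⟩ := hQ p hpQ
        obtain ⟨hy2, hz2⟩ := hQ p' hp'Q
        funext s
        rcases le_or_gt s t with h | h
        · have := congrFun heq s
          simpa [htrunc, h] using this
        · rcases eq_or_lt_of_le (show t + 1 ≤ s by omega) with h' | h'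
          · rw [← h', hy1, hy2]
          · rw [hz1 s h', hz2 s h']
      rw [himg]
      apply ih x
      intro p' hp'
      obtain ⟨p, hp, rfl⟩ := Finset.mem_image.1 hp'
      obtain ⟨hpQ, hpx⟩ := Finset.mem_filter.1 hp
      constructor
      · simp [htrunc, hpx]
      · intro s hs; simp [htrunc]; omega
    calc ∑ x ∈ Q.image (fun p => p t),
          ∑ p ∈ Q.filter (fun p => p t = x), pw q t (trunc p) * q t (p t) y
        ≤ ∑ x ∈ Q.image (fun p => p t), Fk q t x * q t x y :=
          Finset.sum_le_sum inner
      _ ≤ Fk q (t+1) y := by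
          have hne1 : (y - 1 : ℤ) ∉ ({y, y + 1} : Finset ℤ) := by simp; omega
          have hne2 : (y : ℤ) ∉ ({y + 1} : Finset ℤ) := by simp
          have hfk : Fk q (t+1) y = ∑ x ∈ ({y - 1, y, y + 1} : Finset ℤ),
              Fk q t x * q t x y := by
            rw [Finset.sum_insert hne1, Finset.sum_insert hne2, Finset.sum_singleton]
            show _ = _
            simp only [Fk]
            ring
          rw [hfk, ← Finset.sum_filter_of_ne
            (p := fun x => x ∈ ({y - 1, y, y + 1} : Finset ℤ))
            (fun x _ hne => by
              by_contra hmem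
              apply hne
              have : q t x y = 0 := by
                apply hvan
                simp at hmem
                rw [lt_abs]
                omega
              rw [this, mul_zero])]
          apply Finset.sum_le_sum_of_subset_of_nonneg
          · intro x hx
            exact (Finset.mem_filter.1 hx).2
          · intro x _ _
            exact mul_nonneg (Fk_nonneg q hq t x) (hq t x y)
end comb

/-! ### Facts about the specific conductances -/

section facts
variable (ε b b' : ℝ) (hε0 : 0 < ε) (hε1 : ε < 1) (hb : 0 ≤ b) (hbb' : b < b')
    (μ : ℕ → ℤ → ℤ → ℝ)
    (hsupp : ∀ (t : ℕ) (i j : ℤ), 1 < |i - j| → μ t i j = 0)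
    (heven : ∀ (t : ℕ) (i : ℤ), Even ((t : ℤ) + i) →
      μ t i (i - 1) = 1 - ε ∧ μ t i i = b ∧ μ t i (i + 1) = 1 + ε)
    (hodd : ∀ (t : ℕ) (i : ℤ), ¬ Even ((t : ℤ) + i) →
      μ t i (i - 1) = 1 + ε ∧ μ t i i = b' ∧ μ t i (i + 1) = 1 - ε)

include hsupp heven hodd

include hε0 hε1 hb hbb' in
lemma mu_nonneg (t : ℕ) (x y : ℤ) :
    0 ≤ μ t x y := by
  by_cases h : 1 < |x - y|
  · rw [hsupp t x y h]
  · have hy : y = x - 1 ∨ y = x ∨ y = x + 1 := by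
      rw [not_lt, abs_le] at h; omega
    have p2 : Even (((t:ℤ)+x)+2) ↔ Even ((t:ℤ)+x) := by simp [Int.even_add]
    by_cases hpar : Even ((t:ℤ)+x)
    · obtain ⟨h1, h2, h3⟩ := heven t x hpar
      rcases hy with rfl | rfl | rfl
      · rw [h1]; linarith
      · rw [h2]; exact hb
      · rw [h3]; linarith
    · obtain ⟨h1, h2, h3⟩ := hodd t x hpar
      rcases hy with rfl | rfl | rfl
      · rw [h1]; linarith
      · rw [h2]; linarith
      · rw [h3]; linarith

lemma wdeg_eq (t : ℕ) (x : ℤ) :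
    wdeg μ t x = if Even ((t:ℤ) + x) then 2 + b else 2 + b' := by
  have hfin : wdeg μ t x = ∑ y ∈ ({x - 1, x, x + 1} : Finset ℤ), μ t x y := by
    apply tsum_eq_sum
    intro y hy
    apply hsupp
    simp only [Finset.mem_insert, Finset.mem_singleton] at hy
    push_neg at hy
    rw [lt_abs]
    omega
  rw [hfin]
  have hne1 : (x - 1 : ℤ) ≠ x := by omega
  have hne2 : (x - 1 : ℤ) ≠ x + 1 := by omega
  have hne3 : (x : ℤ) ≠ x + 1 := by omega
  rw [Finset.sum_insert (by simp [hne1, hne2]), Finset.sum_insert (by simp [hne3]),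
    Finset.sum_singleton]
  by_cases hpar : Even ((t:ℤ) + x)
  · obtain ⟨h1, h2, h3⟩ := heven t x hpar
    simp [hpar, h1, h2, h3]; ring
  · obtain ⟨h1, h2, h3⟩ := hodd t x hpar
    simp [hpar, h1, h2, h3]; ring

end facts

/-- The Lyapunov function. -/
noncomputable def Vfun (L th : ℝ) (t : ℕ) (x : ℤ) : ℝ :=
  Real.exp (-L * (x:ℝ)) * (if Even ((t:ℤ) + x) then (1:ℝ) else 1 + th)

lemma Vfun_nonneg (L th : ℝ) (hth : 0 ≤ th) (t : ℕ) (x : ℤ) : 0 ≤ Vfun L th t x := by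
  unfold Vfun
  apply mul_nonneg (Real.exp_nonneg _)
  split <;> linarith

lemma Vfun00 (L th : ℝ) : Vfun L th 0 0 = 1 := by
  simp [Vfun]

lemma Vfun_t0 (L th : ℝ) (hth : 0 ≤ th) (t : ℕ) : 1 ≤ Vfun L th t 0 := by
  unfold Vfun
  simp only [Int.cast_zero, mul_zero, Real.exp_zero, add_zero, one_mul]
  split <;> linarith

set_option maxHeartbeats 1000000 in
/-- For the conductances on `ℤ` given by
`μ^{(t)}(i,i-1) = 1-ε`, `μ^{(t)}(i,i) = b`, `μ^{(t)}(i,i+1) = 1+ε` when `t+i` is even, and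
`μ^{(t)}(i,i-1) = 1+ε`, `μ^{(t)}(i,i) = b'`, `μ^{(t)}(i,i+1) = 1-ε` when `t+i` is odd
(with `0 ≤ b < b'`, `ε ∈ (0,1)`), the discrete-time random walk started at `0` satisfies
`P(X_t = 0) ≤ C e^{-ct}` for some `C < ∞`, `c > 0` and all `t ≥ 1`; in particular
the Gaussian on-diagonal heat kernel lower bound `P(X_t = 0) ≥ c₆ t^{-1/2}` fails. -/
theorem stmt2 (ε b b' : ℝ) (hε0 : 0 < ε) (hε1 : ε < 1) (hb : 0 ≤ b) (hbb' : b < b')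
    (μ : ℕ → ℤ → ℤ → ℝ)
    (hsupp : ∀ (t : ℕ) (i j : ℤ), 1 < |i - j| → μ t i j = 0)
    (heven : ∀ (t : ℕ) (i : ℤ), Even ((t : ℤ) + i) →
      μ t i (i - 1) = 1 - ε ∧ μ t i i = b ∧ μ t i (i + 1) = 1 + ε)
    (hodd : ∀ (t : ℕ) (i : ℤ), ¬ Even ((t : ℤ) + i) →
      μ t i (i - 1) = 1 + ε ∧ μ t i i = b' ∧ μ t i (i + 1) = 1 - ε)
    {Ω : Type*} [MeasurableSpace Ω] (P : Measure Ω) [IsProbabilityMeasure P]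
    (X : ℕ → Ω → ℤ) (hX : IsWalkLaw μ P X 0) :
    (∃ C c : ℝ, 0 < c ∧ ∀ t : ℕ, 1 ≤ t →
      (P {ω | X t ω = 0}).toReal ≤ C * Real.exp (-c * t)) ∧
    ¬ ∃ c₆ : ℝ, 0 < c₆ ∧ ∀ t : ℕ, 1 ≤ t →
      c₆ * (t : ℝ) ^ (-(1 : ℝ) / 2) ≤ (P {ω | X t ω = 0}).toReal := by
  classical
  have hb2 : (0:ℝ) < 2 + b := by linarith
  have hb'2 : (0:ℝ) < 2 + b' := by linarith
  obtain ⟨L, th, de, hL0, hth0, hde0, hde1, H1, H2⟩ := arith_core ε b b' hε0 hε1 hb hbb'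
  set q : ℕ → ℤ → ℤ → ℝ := stepP μ with hqdef
  have hμ : ∀ t x y, 0 ≤ μ t x y := fun t x y =>
    mu_nonneg ε b b' hε0 hε1 hb hbb' μ hsupp heven hodd t x y
  have hwd : ∀ t x, wdeg μ t x = if Even ((t:ℤ) + x) then 2 + b else 2 + b' :=
    fun t x => wdeg_eq ε b b' μ hsupp heven hodd t x
  have hwd_pos : ∀ t x, 0 < wdeg μ t x := by
    intro t x
    rw [hwd]
    split <;> linarith
  have hq : ∀ t x y, 0 ≤ q t x y := fun t x y =>
    div_nonneg (hμ t x y) (hwd_pos t x).le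
  have hvan : ∀ (t : ℕ) (x y : ℤ), 1 < |x - y| → q t x y = 0 := by
    intro t x y h
    rw [hqdef]
    unfold stepP
    rw [hsupp t x y h, zero_div]
  -- the Lyapunov contraction
  have hkey : ∀ t x, q t x (x-1) * Vfun L th (t+1) (x-1) + q t x x * Vfun L th (t+1) x
      + q t x (x+1) * Vfun L th (t+1) (x+1) ≤ (1-de) * Vfun L th t x := by
    intro t x
    have c1 : (((t+1:ℕ)):ℤ) + (x-1) = (t:ℤ)+x := by push_cast; ring
    have c2 : (((t+1:ℕ)):ℤ) + x = ((t:ℤ)+x) + 1 := by push_cast; ring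
    have c3 : (((t+1:ℕ)):ℤ) + (x+1) = ((t:ℤ)+x) + 2 := by push_cast; ring
    have r1 : Real.exp (-L * ((x-1:ℤ):ℝ)) = Real.exp (-L*(x:ℝ)) * Real.exp L := by
      rw [← Real.exp_add]; congr 1; push_cast; ring
    have r3 : Real.exp (-L * ((x+1:ℤ):ℝ)) = Real.exp (-L*(x:ℝ)) * Real.exp (-L) := by
      rw [← Real.exp_add]; congr 1; push_cast; ring
    have p2 : Even (((t:ℤ)+x)+2) ↔ Even ((t:ℤ)+x) := by simp [Int.even_add]
    by_cases hpar : Even ((t:ℤ)+x)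
    · obtain ⟨h1, h2, h3⟩ := heven t x hpar
      have hw : wdeg μ t x = 2 + b := by rw [hwd]; simp [hpar]
      have e1 : q t x (x-1) = (1-ε)/(2+b) := by rw [hqdef]; unfold stepP; rw [h1, hw]
      have e2 : q t x x = b/(2+b) := by rw [hqdef]; unfold stepP; rw [h2, hw]
      have e3 : q t x (x+1) = (1+ε)/(2+b) := by rw [hqdef]; unfold stepP; rw [h3, hw]
      unfold Vfun
      rw [c1, c2, c3, e1, e2, e3, r1, r3, if_pos hpar,
        if_neg (by simp [Int.even_add_one, hpar]), if_pos (p2.mpr hpar)]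
      have key : ((1-ε)*Real.exp L + (1+ε)*Real.exp (-L) + b*(1+th))/(2+b) ≤ 1-de :=
        (div_le_iff₀ hb2).mpr (by linarith)
      calc (1-ε)/(2+b) * (Real.exp (-L*(x:ℝ)) * Real.exp L * 1)
            + b/(2+b) * (Real.exp (-L*(x:ℝ)) * (1+th))
            + (1+ε)/(2+b) * (Real.exp (-L*(x:ℝ)) * Real.exp (-L) * 1)
          = Real.exp (-L*(x:ℝ)) *
            (((1-ε)*Real.exp L + (1+ε)*Real.exp (-L) + b*(1+th))/(2+b)) := by ring
        _ ≤ Real.exp (-L*(x:ℝ)) * (1-de) :=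
            mul_le_mul_of_nonneg_left key (Real.exp_nonneg _)
        _ = (1-de) * (Real.exp (-L*(x:ℝ)) * 1) := by ring
    · obtain ⟨h1, h2, h3⟩ := hodd t x hpar
      have hw : wdeg μ t x = 2 + b' := by rw [hwd]; simp [hpar]
      have e1 : q t x (x-1) = (1+ε)/(2+b') := by rw [hqdef]; unfold stepP; rw [h1, hw]
      have e2 : q t x x = b'/(2+b') := by rw [hqdef]; unfold stepP; rw [h2, hw]
      have e3 : q t x (x+1) = (1-ε)/(2+b') := by rw [hqdef]; unfold stepP; rw [h3, hw]
      unfold Vfun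
      rw [c1, c2, c3, e1, e2, e3, r1, r3, if_neg hpar,
        if_pos ((Int.even_add_one).2 hpar),
        if_neg (fun h => hpar (p2.mp h))]
      have key : ((1+ε)*Real.exp L*(1+th) + b' + (1-ε)*Real.exp (-L)*(1+th))/(2+b')
          ≤ (1-de)*(1+th) :=
        (div_le_iff₀ hb'2).mpr (by nlinarith [H2])
      calc (1+ε)/(2+b') * (Real.exp (-L*(x:ℝ)) * Real.exp L * (1+th))
            + b'/(2+b') * (Real.exp (-L*(x:ℝ)) * 1)
            + (1-ε)/(2+b') * (Real.exp (-L*(x:ℝ)) * Real.exp (-L) * (1+th))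
          = Real.exp (-L*(x:ℝ)) *
            (((1+ε)*Real.exp L*(1+th) + b' + (1-ε)*Real.exp (-L)*(1+th))/(2+b')) := by ring
        _ ≤ Real.exp (-L*(x:ℝ)) * ((1-de)*(1+th)) :=
            mul_le_mul_of_nonneg_left key (Real.exp_nonneg _)
        _ = (1-de) * (Real.exp (-L*(x:ℝ)) * (1+th)) := by ring
  have hρ : (0:ℝ) ≤ 1 - de := by linarith
  have hFk : ∀ t, Fk q t 0 ≤ (1-de)^t :=
    Fk_le_pow q hq (Vfun L th) (1-de) (Vfun_nonneg L th hth0.le) hρ hkey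
      (Vfun00 L th) (Vfun_t0 L th hth0.le)
  -- measure bound
  have hP : ∀ t : ℕ, (P {ω | X t ω = 0}).toReal ≤ Fk q t 0 := by
    intro t
    set ext : (Fin t → ℤ) → (ℕ → ℤ) := fun v s => if h : s < t then v ⟨s, h⟩ else 0
      with hextdef
    have hcover : {ω | X t ω = 0} ⊆ ⋃ v : Fin t → ℤ, {ω | ∀ s ≤ t, X s ω = ext v s} := by
      intro ω hω
      refine Set.mem_iUnion.2 ⟨fun i => X i ω, ?_⟩
      intro s hs
      by_cases h : s < t
      · simp [hextdef, h]
      · have hst : s = t := by omega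
        simp only [hextdef, dif_neg h]
        rw [hst]
        exact hω
    have step1 : P {ω | X t ω = 0} ≤ ∑' v : Fin t → ℤ, P {ω | ∀ s ≤ t, X s ω = ext v s} :=
      (measure_mono hcover).trans (measure_iUnion_le _)
    have step2 : ∀ v : Fin t → ℤ,
        P {ω | ∀ s ≤ t, X s ω = ext v s} = ENNReal.ofReal (pw q t (ext v)) := by
      intro v
      rw [hX.2 t (ext v)]
      unfold pw
      by_cases h0 : ext v 0 = 0
      · rw [if_pos h0, if_pos h0, one_mul, one_mul]
      · rw [if_neg h0, if_neg h0, zero_mul, zero_mul, ENNReal.ofReal_zero]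
    have step3 : ∑' v : Fin t → ℤ, ENNReal.ofReal (pw q t (ext v))
        ≤ ENNReal.ofReal (Fk q t 0) := by
      rw [ENNReal.tsum_eq_iSup_sum]
      apply iSup_le
      intro A
      rw [← ENNReal.ofReal_sum_of_nonneg (fun v _ => pw_nonneg q hq t (ext v))]
      apply ENNReal.ofReal_le_ofReal
      have himg : ∑ v ∈ A, pw q t (ext v) = ∑ p ∈ A.image ext, pw q t p := by
        rw [Finset.sum_image]
        intro v _ v' _ h
        funext i
        have := congrFun h i.1
        simpa [hextdef, i.2] using this
      rw [himg]
      apply sum_pw_le q hq hvan t 0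
      intro p hp
      obtain ⟨v, _, rfl⟩ := Finset.mem_image.1 hp
      constructor
      · simp [hextdef]
      · intro s hs; simp only [hextdef]; rw [dif_neg (by omega)]
    have hle : P {ω | X t ω = 0} ≤ ENNReal.ofReal (Fk q t 0) := by
      calc P {ω | X t ω = 0} ≤ ∑' v : Fin t → ℤ, P {ω | ∀ s ≤ t, X s ω = ext v s} := step1
        _ = ∑' v : Fin t → ℤ, ENNReal.ofReal (pw q t (ext v)) := tsum_congr step2
        _ ≤ ENNReal.ofReal (Fk q t 0) := step3
    exact ENNReal.toReal_le_of_le_ofReal (Fk_nonneg q hq t 0) hle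
  -- exponential bound
  have hexp : ∀ t : ℕ, (P {ω | X t ω = 0}).toReal ≤ Real.exp (-de * t) := by
    intro t
    have h1 : (1 - de : ℝ) ≤ Real.exp (-de) := by
      have := Real.add_one_le_exp (-de)
      linarith
    have h2 : (1-de)^t ≤ (Real.exp (-de))^t := pow_le_pow_left₀ hρ h1 t
    have h3 : (Real.exp (-de))^t = Real.exp (-de * t) := by
      rw [← Real.exp_nat_mul]
      ring_nf
    calc (P {ω | X t ω = 0}).toReal ≤ Fk q t 0 := hP t
      _ ≤ (1-de)^t := hFk t
      _ ≤ Real.exp (-de * t) := by rw [← h3]; exact h2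
  constructor
  · exact ⟨1, de, hde0, fun t _ => by simpa using hexp t⟩
  · rintro ⟨c₆, hc6, hlow⟩
    obtain ⟨n, hn⟩ := exists_nat_gt (4 / (c₆ * de^2) + 1)
    have hpos46 : (0:ℝ) < 4 / (c₆ * de^2) := by positivity
    have hn1R : (1:ℝ) ≤ (n:ℝ) := by linarith
    have hn1 : 1 ≤ n := by exact_mod_cast hn1R
    have hnpos : (0:ℝ) < (n:ℝ) := by linarith
    have hlow_n := hlow n hn1
    have hupp_n := hexp n
    -- (n:ℝ)⁻¹ ≤ (n:ℝ)^(-1/2)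
    have hrpow : (n:ℝ)⁻¹ ≤ (n:ℝ) ^ (-(1:ℝ)/2) := by
      have hhalf : (n:ℝ) ^ ((1:ℝ)/2) ≤ (n:ℝ) := by
        calc (n:ℝ) ^ ((1:ℝ)/2) ≤ (n:ℝ) ^ (1:ℝ) :=
          Real.rpow_le_rpow_of_exponent_le hn1R (by norm_num)
        _ = (n:ℝ) := Real.rpow_one _
      have hhpos : (0:ℝ) < (n:ℝ) ^ ((1:ℝ)/2) := Real.rpow_pos_of_pos hnpos _
      have : (n:ℝ) ^ (-(1:ℝ)/2) = ((n:ℝ) ^ ((1:ℝ)/2))⁻¹ := by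
        rw [show (-(1:ℝ)/2) = -((1:ℝ)/2) by norm_num, Real.rpow_neg hnpos.le]
      rw [this]
      exact inv_anti₀ hhpos hhalf
    -- exp(-de n) ≤ 4/(de n)^2
    have hquad : Real.exp (-de * n) ≤ 4 / (de * n)^2 := by
      have hz : (0:ℝ) ≤ de * n / 2 := by positivity
      have h1 : 1 + de * n / 2 ≤ Real.exp (de * n / 2) := by
        have := Real.add_one_le_exp (de * n / 2); linarith
      have h2 : (de * n / 2)^2 ≤ (Real.exp (de * n / 2))^2 := by
        nlinarith [h1, hz, Real.exp_pos (de * n / 2)]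
      have h3 : (Real.exp (de * n / 2))^2 = Real.exp (de * n) := by
        rw [sq, ← Real.exp_add]; ring_nf
      have h4 : (de * n)^2 / 4 ≤ Real.exp (de * n) := by
        rw [← h3]; nlinarith [h2]
      have hinv : (Real.exp (de * n))⁻¹ ≤ ((de * n)^2/4)⁻¹ :=
        inv_anti₀ (by positivity) h4
      calc Real.exp (-de * n) = (Real.exp (de * n))⁻¹ := by
            rw [show (-de * (n:ℝ)) = -(de * n) by ring, Real.exp_neg]
        _ ≤ ((de * n)^2/4)⁻¹ := hinv
        _ = 4 / (de * n)^2 := by rw [inv_div]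
    have hchain : c₆ * (n:ℝ)⁻¹ ≤ 4 / (de * n)^2 := by
      calc c₆ * (n:ℝ)⁻¹ ≤ c₆ * (n:ℝ) ^ (-(1:ℝ)/2) :=
            mul_le_mul_of_nonneg_left hrpow hc6.le
        _ ≤ (P {ω | X n ω = 0}).toReal := hlow_n
        _ ≤ Real.exp (-de * n) := hupp_n
        _ ≤ 4 / (de * n)^2 := hquad
    -- contradiction
    have hfinal : c₆ * de^2 * (n:ℝ) ≤ 4 := by
      have hmul : (c₆ * (n:ℝ)⁻¹) * ((de)^2 * (n:ℝ)^2) ≤ (4 / (de * n)^2) * ((de)^2 * (n:ℝ)^2) := by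
        apply mul_le_mul_of_nonneg_right hchain (by positivity)
      have e1 : (c₆ * (n:ℝ)⁻¹) * ((de)^2 * (n:ℝ)^2) = c₆ * de^2 * (n:ℝ) := by
        field_simp
      have e2 : (4 / (de * n)^2) * ((de)^2 * (n:ℝ)^2) = 4 := by
        field_simp
      rw [e1, e2] at hmul
      exact hmul
    have : (4 / (c₆ * de^2) + 1) * (c₆ * de^2) < (n:ℝ) * (c₆ * de^2) :=
      mul_lt_mul_of_pos_right hn (by positivity)
    have e3 : (4 / (c₆ * de^2) + 1) * (c₆ * de^2) = 4 + c₆ * de^2 := by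
      field_simp
    rw [e3] at this
    linarith [this, hfinal, mul_pos hc6 (pow_pos hde0 2)]
end

section
/- Fix ε ∈ (0,1) and c > 1. Set a = (c−1)/c + 1/((3+ε)c) and a′ = (c−1)/c + 1/((3−ε)c), and let π(A₊) = a′/(a+a′), π(A₋) = a/(a+a′) (the stationary distribution of the two-state chain with q(A₊,A₋)=a, q(A₋,A₊)=a′). Let Δ(A₊) = 2ε/((6+2ε)c) and Δ(A₋) = −2ε/((6−2ε)c). Then the average drift satisfies β̂ := Δ(A₊)π(A₊) + Δ(A₋)π(A₋) < 0. -/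
/-- Fix `ε ∈ (0,1)` and `c > 1`. With
`a = (c-1)/c + 1/((3+ε)c)`, `a' = (c-1)/c + 1/((3-ε)c)`,
`π(A₊) = a'/(a+a')`, `π(A₋) = a/(a+a')`,
`Δ(A₊) = 2ε/((6+2ε)c)` and `Δ(A₋) = -2ε/((6-2ε)c)`, the average drift satisfies
`β̂ = Δ(A₊)π(A₊) + Δ(A₋)π(A₋) < 0`. -/
theorem stmt9 (ε c : ℝ) (hε0 : 0 < ε) (hε1 : ε < 1) (hc : 1 < c) :
    (2 * ε / ((6 + 2 * ε) * c)) *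
        (((c - 1) / c + 1 / ((3 - ε) * c)) /
          (((c - 1) / c + 1 / ((3 + ε) * c)) + ((c - 1) / c + 1 / ((3 - ε) * c)))) +
      (-(2 * ε) / ((6 - 2 * ε) * c)) *
        (((c - 1) / c + 1 / ((3 + ε) * c)) /
          (((c - 1) / c + 1 / ((3 + ε) * c)) + ((c - 1) / c + 1 / ((3 - ε) * c)))) < 0 := by
  have hc0 : (0:ℝ) < c := by linarith
  have h3p : (0:ℝ) < 3 + ε := by linarith
  have h3m : (0:ℝ) < 3 - ε := by linarith
  have h6p : (0:ℝ) < 6 + 2*ε := by linarith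
  have h6m : (0:ℝ) < 6 - 2*ε := by linarith
  have hk : 0 < (c - 1) / c := div_pos (by linarith) hc0
  set a : ℝ := (c - 1) / c + 1 / ((3 + ε) * c) with ha_def
  set a' : ℝ := (c - 1) / c + 1 / ((3 - ε) * c) with ha'_def
  clear_value a a'
  have h1 : (0:ℝ) < 1 / ((3 + ε) * c) := by positivity
  have h2 : (0:ℝ) < 1 / ((3 - ε) * c) := by positivity
  have ha : 0 < a := by rw [ha_def]; linarith
  have ha' : 0 < a' := by rw [ha'_def]; linarith
  have hs : 0 < a + a' := by linarith
  have key : (6 - 2*ε) * a' < (6 + 2*ε) * a := by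
    have heq : (6 + 2*ε) * a - (6 - 2*ε) * a' = 4*ε*((c-1)/c) := by
      rw [ha_def, ha'_def]
      field_simp
      ring
    have hp : 0 < 4 * ε * ((c - 1) / c) := mul_pos (by positivity) hk
    nlinarith [heq, hp]
  have hmain : 2 * ε / ((6 + 2 * ε) * c) * (a' / (a + a')) <
      2 * ε / ((6 - 2 * ε) * c) * (a / (a + a')) := by
    rw [div_mul_div_comm, div_mul_div_comm, div_lt_div_iff₀ (by positivity) (by positivity)]
    nlinarith [mul_lt_mul_of_pos_left key (by positivity : (0:ℝ) < 2*ε*c*(a+a'))]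
  have hneg : (-(2 * ε) / ((6 - 2 * ε) * c)) * (a / (a + a')) =
      -(2 * ε / ((6 - 2 * ε) * c) * (a / (a + a'))) := by ring
  rw [hneg]
  linarith
end

section
/- Define E(t,D) := exp(−D·arcsinh(D/t) + t(√(1+D²/t²) − 1)) for reals t, D > 0. There exist constants 0 < c₁ ≤ c₂ < ∞ such that for all reals D, t with 0 < t ≤ D, exp(−c₂ D·max(1, log(D/t))) ≤ E(t,D) ≤ exp(−c₁ D·max(1, log(D/t))); equivalently, c₁ D·max(1, log(D/t)) ≤ D·arcsinh(D/t) − t(√(1+D²/t²) − 1) ≤ c₂ D·max(1, log(D/t)). -/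
/-!
Put `u = D / t ≥ 1`. The exponent is `t · Φ(u)` with `Φ(u) = u arsinh u - (√(1 + u²) - 1)`, and
`D max(1, log(D/t)) = t · u max(1, log u)`, so everything reduces to `u max(1, log u) ≍ Φ(u)` on
`u ≥ 1`. The upper bound follows from `arsinh u ≤ log (3u)`. For the lower bound,
`arsinh u ≥ log (2u)` and `√(1 + u²) - 1 ≤ u² / (u + 1)` give
`Φ(u) ≥ u (log 2 + log u - u / (u + 1))`, which dominates `u (1 + log u) / 10` because
`log u ≥ 1 - 1/u`.
-/

open Real

namespace Real

lemma log_two_mul_le_arsinh {u : ℝ} (hu : 0 < u) : log (2 * u) ≤ arsinh u := by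
  rw [log_le_iff_le_exp (by positivity), exp_arsinh]
  nlinarith [le_sqrt_of_sq_le (show u ^ 2 ≤ 1 + u ^ 2 by linarith)]

lemma arsinh_le_log_three_mul {u : ℝ} (hu : 1 ≤ u) : arsinh u ≤ log (3 * u) := by
  rw [le_log_iff_exp_le (by positivity), exp_arsinh]
  nlinarith [sqrt_le_sqrt (show 1 + u ^ 2 ≤ (2 * u) ^ 2 by nlinarith),
    sqrt_sq (show 0 ≤ 2 * u by linarith)]

lemma sqrt_one_add_sq_sub_one_le {u : ℝ} (hu : 0 ≤ u) :
    √(1 + u ^ 2) - 1 ≤ u ^ 2 / (u + 1) := by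
  have hsq : √(1 + u ^ 2) ^ 2 = 1 + u ^ 2 := sq_sqrt (by positivity)
  have hge : u ≤ √(1 + u ^ 2) := le_sqrt_of_sq_le (by linarith)
  rw [le_div_iff₀ (by linarith)]
  nlinarith

end Real

/-- Equal to `∫₀ᵘ arsinh s ds`: both vanish at `0` and have derivative `arsinh u`. -/
noncomputable def arsinhPrimitive (u : ℝ) : ℝ := u * arsinh u - (√(1 + u ^ 2) - 1)

lemma mul_arsinhPrimitive_div {D t : ℝ} (ht : t ≠ 0) :
    t * arsinhPrimitive (D / t) = D * arsinh (D / t) - t * (√(1 + D ^ 2 / t ^ 2) - 1) := by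
  rw [arsinhPrimitive, div_pow]
  field_simp

lemma arsinhPrimitive_le {u : ℝ} (hu : 1 ≤ u) :
    arsinhPrimitive u ≤ 3 * (u * max 1 (log u)) := by
  have hars : arsinh u ≤ log 3 + log u := by
    rw [← log_mul three_ne_zero (by positivity)]
    exact arsinh_le_log_three_mul hu
  have hlog3 : log 3 ≤ 2 := by linarith [log_le_sub_one_of_pos (x := 3) (by norm_num)]
  have hsqrt : 1 ≤ √(1 + u ^ 2) := one_le_sqrt.mpr (by nlinarith)
  have hmax : arsinh u ≤ 3 * max 1 (log u) := by
    linarith [le_max_left 1 (log u), le_max_right 1 (log u)]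
  unfold arsinhPrimitive
  nlinarith

lemma le_arsinhPrimitive {u : ℝ} (hu : 1 ≤ u) :
    1 / 10 * (u * max 1 (log u)) ≤ arsinhPrimitive u := by
  have hu0 : 0 < u := by linarith
  have hlog : 0 ≤ log u := log_nonneg hu
  have hlog_lb : u - 1 ≤ u * log u := by
    have := mul_le_mul_of_nonneg_left (one_sub_inv_le_log_of_pos hu0) hu0.le
    rwa [mul_sub, mul_one, mul_inv_cancel₀ hu0.ne'] at this
  have hars : log 2 + log u ≤ arsinh u := by
    rw [← log_mul two_ne_zero hu0.ne']
    exact log_two_mul_le_arsinh hu0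
  have hkey : u ^ 2 / (u + 1) ≤ u * (log 2 + log u) - 1 / 10 * (u * (1 + log u)) := by
    rw [div_le_iff₀ (by linarith)]
    nlinarith [log_two_gt_d9]
  have hmax : max 1 (log u) ≤ 1 + log u := max_le (by linarith) (by linarith)
  calc 1 / 10 * (u * max 1 (log u)) ≤ 1 / 10 * (u * (1 + log u)) := by gcongr
    _ ≤ u * (log 2 + log u) - u ^ 2 / (u + 1) := by linarith
    _ ≤ arsinhPrimitive u := by
      unfold arsinhPrimitive
      nlinarith [sqrt_one_add_sq_sub_one_le hu0.le]

/-- For `E(t,D) = exp(-D·arsinh(D/t) + t(√(1+D²/t²) - 1))` there are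
constants `0 < c₁ ≤ c₂ < ∞` such that for all `0 < t ≤ D`,
`exp(-c₂ D max(1, log(D/t))) ≤ E(t,D) ≤ exp(-c₁ D max(1, log(D/t)))`; equivalently,
`c₁ D max(1, log(D/t)) ≤ D·arsinh(D/t) - t(√(1+D²/t²) - 1) ≤ c₂ D max(1, log(D/t))`. -/
theorem stmt11 :
    ∃ c₁ c₂ : ℝ, 0 < c₁ ∧ c₁ ≤ c₂ ∧
      ∀ D t : ℝ, 0 < t → t ≤ D →
        (c₁ * (D * max 1 (Real.log (D / t))) ≤
            D * Real.arsinh (D / t) - t * (Real.sqrt (1 + D ^ 2 / t ^ 2) - 1) ∧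
          D * Real.arsinh (D / t) - t * (Real.sqrt (1 + D ^ 2 / t ^ 2) - 1) ≤
            c₂ * (D * max 1 (Real.log (D / t)))) ∧
        (Real.exp (-(c₂ * (D * max 1 (Real.log (D / t))))) ≤
            Real.exp (-(D * Real.arsinh (D / t)) +
              t * (Real.sqrt (1 + D ^ 2 / t ^ 2) - 1)) ∧
          Real.exp (-(D * Real.arsinh (D / t)) +
              t * (Real.sqrt (1 + D ^ 2 / t ^ 2) - 1)) ≤
            Real.exp (-(c₁ * (D * max 1 (Real.log (D / t)))))) := by
  refine ⟨1 / 10, 3, by norm_num, by norm_num, fun D t ht htD => ?_⟩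
  have hu : 1 ≤ D / t := (one_le_div ht).mpr htD
  have hD : t * (D / t * max 1 (log (D / t))) = D * max 1 (log (D / t)) := by
    field_simp
  have hlower := mul_le_mul_of_nonneg_left (le_arsinhPrimitive hu) ht.le
  have hupper := mul_le_mul_of_nonneg_left (arsinhPrimitive_le hu) ht.le
  rw [mul_arsinhPrimitive_div ht.ne', mul_left_comm, hD] at hlower hupper
  refine ⟨⟨hlower, hupper⟩, exp_le_exp.mpr ?_, exp_le_exp.mpr ?_⟩ <;> linarith
end
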